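/- Let T ∈ G be hyperbolic with light-like eigenvectors (y₁,1) and (y₂,1), and let M = span{(y₁,1),(y₂,1)}. Then H ⊕ ℂ = M ⊕ M^† (internal direct sum), T maps M^† bijectively onto M^†, the form A is positive definite on M^†, M^† is complete for the norm induced by A, and the restriction of T to M^† is a unitary operator of the Hilbert space (M^†, A). -/

import Mathlib

noncomputable section

variable {H : Type*} [NormedAddCommGroup H] [InnerProductSpace ℂ H] [CompleteSpace H]

/-- The Hermitian form `A((x,z),(y,w)) = ⟨x,y⟩ - z·conj w` on `H ⊕ ℂ`, linear in the
first argument (the paper's convention); `⟨x,y⟩` (linear in `x`) is `inner y x` in Mathlib. -/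
def formA (u v : H × ℂ) : ℂ :=
  (inner ℂ v.1 u.1 : ℂ) - u.2 * (starRingEnd ℂ) v.2

/-- The standard inner product of the Hilbert space `H ⊕ ℂ`, linear in the first argument. -/
def ipStd (u v : H × ℂ) : ℂ :=
  (inner ℂ v.1 u.1 : ℂ) + u.2 * (starRingEnd ℂ) v.2

/-- Membership in the group `G` of bounded bijective linear maps preserving `A`. -/
def memG (T : (H × ℂ) →L[ℂ] (H × ℂ)) : Prop :=
  Function.Bijective T ∧ ∀ u v : H × ℂ, formA (T u) (T v) = formA u v

/-- `T` is elliptic: it has an eigenvector `(x,1)` with `‖x‖ < 1`. -/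
def IsEllipticG (T : (H × ℂ) →L[ℂ] (H × ℂ)) : Prop :=
  ∃ x : H, ‖x‖ < 1 ∧ ∃ μ : ℂ, T (x, 1) = μ • ((x, 1) : H × ℂ)

/-- Points `x` of the closed unit ball with `(x,1)` an eigenvector of `T`. -/
def fixedBall (T : (H × ℂ) →L[ℂ] (H × ℂ)) : Set H :=
  {x : H | ‖x‖ ≤ 1 ∧ ∃ μ : ℂ, T (x, 1) = μ • ((x, 1) : H × ℂ)}

/-- `T` is hyperbolic: not elliptic, with exactly two fixed points in the closed ball. -/
def IsHyperbolicG (T : (H × ℂ) →L[ℂ] (H × ℂ)) : Prop :=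
  ¬ IsEllipticG T ∧ ∃ x y : H, x ≠ y ∧ fixedBall T = {x, y}

/-- `T` is parabolic: not elliptic, with exactly one fixed point in the closed ball. -/
def IsParabolicG (T : (H × ℂ) →L[ℂ] (H × ℂ)) : Prop :=
  ¬ IsEllipticG T ∧ ∃ x : H, fixedBall T = {x}

/-- `M†`, the `A`-orthogonal complement of a subspace `M` of `H ⊕ ℂ`. -/
def daggerA (M : Submodule ℂ (H × ℂ)) : Submodule ℂ (H × ℂ) where
  carrier := {v | ∀ m ∈ M, formA v m = 0}
  add_mem' := by
    intro a b ha hb m hm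
    have h1 := ha m hm
    have h2 := hb m hm
    simp only [formA, Prod.fst_add, Prod.snd_add, inner_add_right, add_mul] at *
    linear_combination h1 + h2
  zero_mem' := by
    intro m hm
    simp [formA]
  smul_mem' := by
    intro c a ha m hm
    have h1 := ha m hm
    simp only [formA, Prod.smul_fst, Prod.smul_snd, inner_smul_right, smul_eq_mul] at *
    linear_combination c * h1

/-- The norm induced by `A` on a subspace where `A` is positive. -/
def nA (v : H × ℂ) : ℝ := Real.sqrt (formA v v).re

/-- Sequential completeness of a subspace for the norm induced by `A`. -/
def CompleteForA (M : Submodule ℂ (H × ℂ)) : Prop :=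
  ∀ f : ℕ → H × ℂ, (∀ n, f n ∈ M) →
    (∀ ε : ℝ, 0 < ε → ∃ N : ℕ, ∀ m n : ℕ, N ≤ m → N ≤ n → nA (f m - f n) < ε) →
    ∃ v ∈ M, ∀ ε : ℝ, 0 < ε → ∃ N : ℕ, ∀ n : ℕ, N ≤ n → nA (f n - v) < ε

end

/-! The plane `M` spanned by two light-like vectors `e₁, e₂` with `A(e₁,e₂) ≠ 0` is a hyperbolic
plane, so `A` is nondegenerate on it and `H ⊕ ℂ = M ⊕ M^†`. Since `T` preserves `A` and has
`e₁, e₂` as eigenvectors, it preserves `M^†`. For `(x,z) ∈ M^†` the two orthogonality conditions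
read `⟨x,y₁⟩ = ⟨x,y₂⟩ = z`, so `2|z| ≤ ‖y₁ + y₂‖ ‖x‖`; as `‖y₁ + y₂‖² = 4 - ‖y₁ - y₂‖² < 4`,
this makes `A` on `M^†` comparable with the Hilbert norm, which gives positivity, and completeness
because `M^†` is closed. -/

section

variable {H : Type*} [NormedAddCommGroup H] [InnerProductSpace ℂ H]

lemma formA_add_left (u v w : H × ℂ) : formA (u + v) w = formA u w + formA v w := by
  simp only [formA, Prod.fst_add, Prod.snd_add, inner_add_right]; ring

lemma formA_sub_left (u v w : H × ℂ) : formA (u - v) w = formA u w - formA v w := by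
  simp only [formA, Prod.fst_sub, Prod.snd_sub, inner_sub_right]; ring

lemma formA_smul_left (c : ℂ) (u w : H × ℂ) : formA (c • u) w = c * formA u w := by
  simp only [formA, Prod.smul_fst, Prod.smul_snd, inner_smul_right, smul_eq_mul]; ring

lemma formA_add_right (u v w : H × ℂ) : formA u (v + w) = formA u v + formA u w := by
  simp only [formA, Prod.fst_add, Prod.snd_add, inner_add_left, map_add]; ring

lemma formA_smul_right (c : ℂ) (u w : H × ℂ) :
    formA u (c • w) = starRingEnd ℂ c * formA u w := by
  simp only [formA, Prod.smul_fst, Prod.smul_snd, inner_smul_left, smul_eq_mul, map_mul]; ring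

lemma formA_conj_symm (u v : H × ℂ) : starRingEnd ℂ (formA u v) = formA v u := by
  simp only [formA, map_sub, map_mul, inner_conj_symm, Complex.conj_conj]; ring

lemma formA_self_re (u : H × ℂ) : (formA u u).re = ‖u.1‖ ^ 2 - ‖u.2‖ ^ 2 := by
  simp [formA, Complex.mul_conj, inner_self_eq_norm_sq_to_K, Complex.normSq_eq_norm_sq,
    ← Complex.ofReal_pow]

lemma formA_self_im (u : H × ℂ) : (formA u u).im = 0 := by
  simp [formA, Complex.mul_conj, inner_self_eq_norm_sq_to_K, ← Complex.ofReal_pow]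

lemma continuous_formA_left (w : H × ℂ) : Continuous fun u : H × ℂ => formA u w :=
  (continuous_const.inner continuous_fst).sub (continuous_snd.mul continuous_const)

lemma nA_le_norm (u : H × ℂ) : nA u ≤ ‖u‖ := by
  refine Real.sqrt_le_iff.mpr ⟨norm_nonneg u, ?_⟩
  rw [formA_self_re]
  nlinarith [norm_fst_le u, norm_nonneg u.1, sq_nonneg ‖u.2‖]

lemma isClosed_daggerA (M : Submodule ℂ (H × ℂ)) : IsClosed (daggerA M : Set (H × ℂ)) := by
  have h : (daggerA M : Set (H × ℂ)) = ⋂ m ∈ M, (fun u => formA u m) ⁻¹' {0} := by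
    ext v; simp [daggerA]
  rw [h]
  exact isClosed_biInter fun m _ => isClosed_singleton.preimage (continuous_formA_left m)

lemma mem_daggerA_span_pair {a b v : H × ℂ} :
    v ∈ daggerA (Submodule.span ℂ {a, b}) ↔ formA v a = 0 ∧ formA v b = 0 := by
  constructor
  · intro h
    exact ⟨h a (Submodule.subset_span (by simp)), h b (Submodule.subset_span (by simp))⟩
  · rintro ⟨ha, hb⟩ m hm
    induction hm using Submodule.span_induction with
    | mem x hx => rcases hx with rfl | rfl <;> assumption
    | zero => simp [formA]
    | add x y _ _ hx hy => rw [formA_add_right, hx, hy, add_zero]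
    | smul c x _ hx => rw [formA_smul_right, hx, mul_zero]

lemma isCompl_span_pair_daggerA {a b : H × ℂ} (ha : formA a a = 0) (hb : formA b b = 0)
    (hab : formA a b ≠ 0) :
    IsCompl (Submodule.span ℂ {a, b}) (daggerA (Submodule.span ℂ {a, b})) := by
  have hba : formA b a ≠ 0 := by
    rw [← formA_conj_symm]; exact (map_ne_zero _).mpr hab
  constructor
  · rw [Submodule.disjoint_def]
    intro v hvM hvD
    obtain ⟨s, t, rfl⟩ := Submodule.mem_span_pair.mp hvM
    obtain ⟨hva, hvb⟩ := mem_daggerA_span_pair.mp hvD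
    simp only [formA_add_left, formA_smul_left, ha, hb, mul_zero, zero_add, add_zero] at hva hvb
    simp [(mul_eq_zero.mp hvb).resolve_right hab, (mul_eq_zero.mp hva).resolve_right hba]
  · rw [codisjoint_iff, eq_top_iff]
    intro v _
    set p := (formA v b / formA a b) • a + (formA v a / formA b a) • b
    refine Submodule.mem_sup.mpr ⟨p, Submodule.mem_span_pair.mpr ⟨_, _, rfl⟩, v - p, ?_,
      add_sub_cancel p v⟩
    refine mem_daggerA_span_pair.mpr ⟨?_, ?_⟩ <;>
      simp only [p, formA_sub_left, formA_add_left, formA_smul_left, ha, hb, mul_zero,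
        zero_add, add_zero, div_mul_cancel₀ _ hab, div_mul_cancel₀ _ hba, sub_self]

lemma eigenvalue_ne_zero_of_injective {T : (H × ℂ) →L[ℂ] (H × ℂ)} (hT : Function.Injective T)
    {a : H × ℂ} {μ : ℂ} (ha : T a = μ • a) (ha₀ : a ≠ 0) : μ ≠ 0 := by
  rintro rfl
  exact ha₀ (hT (by rw [ha, zero_smul, map_zero]))

lemma formA_apply_left_eq_zero_iff {T : (H × ℂ) →L[ℂ] (H × ℂ)}
    (hT : ∀ u v, formA (T u) (T v) = formA u v) {a : H × ℂ} {μ : ℂ} (hμ : μ ≠ 0)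
    (ha : T a = μ • a) (v : H × ℂ) : formA (T v) a = 0 ↔ formA v a = 0 := by
  rw [← hT v a, ha, formA_smul_right, mul_eq_zero, or_iff_right ((map_ne_zero _).mpr hμ)]

lemma bijOn_daggerA_span_pair {T : (H × ℂ) →L[ℂ] (H × ℂ)} (hT : memG T) {a b : H × ℂ}
    {μ ν : ℂ} (ha : T a = μ • a) (hb : T b = ν • b) (ha₀ : a ≠ 0) (hb₀ : b ≠ 0) :
    Set.BijOn T (daggerA (Submodule.span ℂ {a, b}) : Set (H × ℂ))
      (daggerA (Submodule.span ℂ {a, b})) := by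
  have hTa := formA_apply_left_eq_zero_iff hT.2
    (eigenvalue_ne_zero_of_injective hT.1.1 ha ha₀) ha
  have hTb := formA_apply_left_eq_zero_iff hT.2
    (eigenvalue_ne_zero_of_injective hT.1.1 hb hb₀) hb
  have hmem (v : H × ℂ) : T v ∈ daggerA (Submodule.span ℂ {a, b}) ↔
      v ∈ daggerA (Submodule.span ℂ {a, b}) := by
    simp only [mem_daggerA_span_pair, hTa, hTb]
  refine ⟨fun v hv => (hmem v).mpr hv, hT.1.1.injOn, fun w hw => ?_⟩
  obtain ⟨v, rfl⟩ := hT.1.2 w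
  exact ⟨v, (hmem v).mp hw, rfl⟩

lemma norm_eq_one_of_formA_self_eq_zero {y : H} (hy : formA ((y, 1) : H × ℂ) (y, 1) = 0) :
    ‖y‖ = 1 := by
  have h := congrArg Complex.re hy
  rw [formA_self_re, norm_one, one_pow, Complex.zero_re, sub_eq_zero] at h
  exact (pow_eq_one_iff_of_nonneg (norm_nonneg y) two_ne_zero).mp h

lemma formA_ne_zero_of_ne {y₁ y₂ : H} (h₁ : ‖y₁‖ = 1) (h₂ : ‖y₂‖ = 1) (hne : y₁ ≠ y₂) :
    formA ((y₁, 1) : H × ℂ) (y₂, 1) ≠ 0 := by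
  have hformA : formA ((y₁, 1) : H × ℂ) (y₂, 1) = inner ℂ y₂ y₁ - 1 := by simp [formA]
  rw [hformA, sub_ne_zero]
  intro hinner
  have hsq := norm_sub_sq (𝕜 := ℂ) y₂ y₁
  rw [hinner, h₁, h₂, RCLike.one_re] at hsq
  exact hne (norm_sub_eq_zero_iff.mp (by nlinarith [norm_nonneg (y₂ - y₁)])).symm

lemma two_mul_norm_snd_le_of_mem_daggerA {y₁ y₂ : H} {u : H × ℂ}
    (hu : u ∈ daggerA (Submodule.span ℂ {((y₁, 1) : H × ℂ), (y₂, 1)})) :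
    2 * ‖u.2‖ ≤ ‖y₁ + y₂‖ * ‖u.1‖ := by
  obtain ⟨h₁, h₂⟩ := mem_daggerA_span_pair.mp hu
  simp only [formA, map_one, mul_one, sub_eq_zero] at h₁ h₂
  have hsum : (inner ℂ (y₁ + y₂) u.1 : ℂ) = 2 * u.2 := by
    rw [inner_add_left, h₁, h₂]; ring
  simpa [hsum] using norm_inner_le_norm (𝕜 := ℂ) (y₁ + y₂) u.1

lemma mul_norm_le_nA_of_mem_daggerA {y₁ y₂ : H} (h₁ : ‖y₁‖ = 1) (h₂ : ‖y₂‖ = 1) {u : H × ℂ}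
    (hu : u ∈ daggerA (Submodule.span ℂ {((y₁, 1) : H × ℂ), (y₂, 1)})) :
    ‖y₁ - y₂‖ / 2 * ‖u‖ ≤ nA u := by
  have hsnd := two_mul_norm_snd_le_of_mem_daggerA hu
  have hpar : ‖y₁ + y₂‖ ^ 2 + ‖y₁ - y₂‖ ^ 2 = 4 := by
    nlinarith [parallelogram_law_with_norm ℂ y₁ y₂]
  have hsum_le : ‖y₁ + y₂‖ ≤ 2 := by nlinarith [norm_nonneg (y₁ + y₂), sq_nonneg ‖y₁ - y₂‖]
  have hnorm : ‖u‖ = ‖u.1‖ := by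
    rw [Prod.norm_def, max_eq_left]
    nlinarith [norm_nonneg u.1, norm_nonneg u.2]
  have hsq : (2 * ‖u.2‖) ^ 2 ≤ (‖y₁ + y₂‖ * ‖u.1‖) ^ 2 := pow_le_pow_left₀ (by positivity) hsnd 2
  refine Real.le_sqrt_of_sq_le ?_
  rw [formA_self_re, hnorm]
  nlinarith

lemma formA_self_re_pos_of_mul_norm_le_nA {c : ℝ} (hc : 0 < c) {u : H × ℂ}
    (hu : c * ‖u‖ ≤ nA u) (hu₀ : u ≠ 0) : 0 < (formA u u).re :=
  Real.sqrt_pos.mp (lt_of_lt_of_le (by positivity) hu)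

lemma completeForA_of_isClosed [CompleteSpace H] {S : Submodule ℂ (H × ℂ)}
    (hS : IsClosed (S : Set (H × ℂ))) {c : ℝ} (hc : 0 < c) (hnA : ∀ u ∈ S, c * ‖u‖ ≤ nA u) :
    CompleteForA S := by
  intro f hf hcau
  have hcauchy : CauchySeq f := by
    refine Metric.cauchySeq_iff.mpr fun ε hε => ?_
    obtain ⟨N, hN⟩ := hcau (c * ε) (by positivity)
    refine ⟨N, fun m hm n hn => ?_⟩
    rw [dist_eq_norm, ← mul_lt_mul_iff_right₀ hc]
    exact (hnA _ (S.sub_mem (hf m) (hf n))).trans_lt (hN m n hm hn)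
  obtain ⟨v, hv⟩ := cauchySeq_tendsto_of_complete hcauchy
  refine ⟨v, hS.mem_of_tendsto hv (Filter.Eventually.of_forall hf), fun ε hε => ?_⟩
  obtain ⟨N, hN⟩ := Metric.tendsto_atTop.mp hv ε hε
  exact ⟨N, fun n hn => (nA_le_norm _).trans_lt (by simpa [dist_eq_norm] using hN n hn)⟩

end

section
variable {H : Type*} [NormedAddCommGroup H] [InnerProductSpace ℂ H] [CompleteSpace H]

theorem hyperbolic_decomposition_general (T : (H × ℂ) →L[ℂ] (H × ℂ))
    (hT : memG T)
    (y₁ y₂ : H) (hne : y₁ ≠ y₂)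
    (hlight₁ : formA ((y₁, 1) : H × ℂ) ((y₁, 1) : H × ℂ) = 0)
    (hlight₂ : formA ((y₂, 1) : H × ℂ) ((y₂, 1) : H × ℂ) = 0)
    (μ₁ μ₂ : ℂ)
    (heig₁ : T (y₁, 1) = μ₁ • ((y₁, 1) : H × ℂ))
    (heig₂ : T (y₂, 1) = μ₂ • ((y₂, 1) : H × ℂ))
    (M : Submodule ℂ (H × ℂ))
    (hM : M = Submodule.span ℂ {((y₁, 1) : H × ℂ), ((y₂, 1) : H × ℂ)}) :
    -- internal direct sum H ⊕ ℂ = M ⊕ M†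
    IsCompl M (daggerA M) ∧
    -- T maps M† bijectively onto M†
    Set.BijOn T (daggerA M : Set (H × ℂ)) (daggerA M : Set (H × ℂ)) ∧
    -- A is positive definite on M†
    (∀ v ∈ daggerA M, v ≠ 0 → 0 < (formA v v).re ∧ (formA v v).im = 0) ∧
    -- M† is complete for the norm induced by A
    CompleteForA (daggerA M) ∧
    -- the restriction of T to M† is a unitary of the Hilbert space (M†, A)
    (∀ u ∈ daggerA M, ∀ w ∈ daggerA M, formA (T u) (T w) = formA u w) := by
  subst hM
  have hy₁ := norm_eq_one_of_formA_self_eq_zero hlight₁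
  have hy₂ := norm_eq_one_of_formA_self_eq_zero hlight₂
  have hc : 0 < ‖y₁ - y₂‖ / 2 := by simpa using sub_ne_zero.mpr hne
  have hcoercive := fun u (hu : u ∈ daggerA _) => mul_norm_le_nA_of_mem_daggerA hy₁ hy₂ hu
  exact ⟨isCompl_span_pair_daggerA hlight₁ hlight₂ (formA_ne_zero_of_ne hy₁ hy₂ hne),
    bijOn_daggerA_span_pair hT heig₁ heig₂ (by simp) (by simp),
    fun v hv hv₀ => ⟨formA_self_re_pos_of_mul_norm_le_nA hc (hcoercive v hv) hv₀, formA_self_im v⟩,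
    completeForA_of_isClosed (isClosed_daggerA _) hc hcoercive,
    fun u _ w _ => hT.2 u w⟩

/-- decomposition of `H ⊕ ℂ` along the two light-like eigenvectors of a
hyperbolic isometry; the restriction of `T` to `M†` is a unitary of `(M†, A)`. -/
theorem hyperbolic_decomposition (T : (H × ℂ) →L[ℂ] (H × ℂ))
    (hT : memG T) (hhyp : IsHyperbolicG T)
    (y₁ y₂ : H) (hne : y₁ ≠ y₂)
    (hlight₁ : formA ((y₁, 1) : H × ℂ) ((y₁, 1) : H × ℂ) = 0)
    (hlight₂ : formA ((y₂, 1) : H × ℂ) ((y₂, 1) : H × ℂ) = 0)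
    (μ₁ μ₂ : ℂ)
    (heig₁ : T (y₁, 1) = μ₁ • ((y₁, 1) : H × ℂ))
    (heig₂ : T (y₂, 1) = μ₂ • ((y₂, 1) : H × ℂ))
    (M : Submodule ℂ (H × ℂ))
    (hM : M = Submodule.span ℂ {((y₁, 1) : H × ℂ), ((y₂, 1) : H × ℂ)}) :
    -- internal direct sum H ⊕ ℂ = M ⊕ M†
    IsCompl M (daggerA M) ∧
    -- T maps M† bijectively onto M†
    Set.BijOn T (daggerA M : Set (H × ℂ)) (daggerA M : Set (H × ℂ)) ∧
    -- A is positive definite on M†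
    (∀ v ∈ daggerA M, v ≠ 0 → 0 < (formA v v).re ∧ (formA v v).im = 0) ∧
    -- M† is complete for the norm induced by A
    CompleteForA (daggerA M) ∧
    -- the restriction of T to M† is a unitary of the Hilbert space (M†, A)
    (∀ u ∈ daggerA M, ∀ w ∈ daggerA M, formA (T u) (T w) = formA u w) :=
  hyperbolic_decomposition_general T hT y₁ y₂ hne hlight₁ hlight₂ μ₁ μ₂ heig₁ heig₂ M hM

end
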